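/- If A ∈ ℝ^{m×n} satisfies S-REC(S_{(a+b)l/2, G'}, 1-α, δ) and RIP(bl, α) for integers a, b, l > 0 with (a+b)l even, and α ∈ (0,1), then for every η with ‖Aη‖₂ ≤ ε, ‖η‖₂ ≤ (bl)^{-1/2}(C₀+1) σ_{al,G'}(η) + C₁ε + δ', where C₀ = (1+α)/(1-α), C₁ = 1/(1-α), δ' = δ/(1-α). -/

import Mathlib

noncomputable section

/-- The ℓ₂ norm of a vector in ℝⁿ. -/
def l2 {n : ℕ} (x : Fin n → ℝ) : ℝ := Real.sqrt (∑ i, (x i) ^ 2)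

/-- The ℓ₁ norm of a vector in ℝⁿ. -/
def l1 {n : ℕ} (x : Fin n → ℝ) : ℝ := ∑ i, |x i|

/-- The ℓ₀ "norm": number of nonzero coordinates. -/
def l0 {n : ℕ} (x : Fin n → ℝ) : ℕ := (Finset.univ.filter fun i => x i ≠ 0).card

/-- S_{j,G'} where G'(z₁,z₂) = G z₁ - G z₂ : vectors within j-sparse deviation
    of the range of the difference function. -/
def SjG' {n k : ℕ} (G : (Fin k → ℝ) → (Fin n → ℝ)) (j : ℕ) : Set (Fin n → ℝ) :=
  {w | ∃ z₁ z₂ : Fin k → ℝ, l0 (w - (G z₁ - G z₂)) ≤ j}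

/-- σ_T(x) = inf_{xh ∈ T} ‖x - xh‖₁. -/
def sigma' {n : ℕ} (T : Set (Fin n → ℝ)) (x : Fin n → ℝ) : ℝ :=
  sInf {d : ℝ | ∃ xh ∈ T, d = l1 (x - xh)}

/-!
Fix `η̂ = G z₁ - G z₂ + v` with `v` an `al`-sparse vector and put `h = η - (G z₁ - G z₂)`.
Sort the coordinates of `h` by decreasing modulus and cut them into a head of the first
`(a+b)l` of them and tails of `bl` each. The head, shifted by `G z₁ - G z₂`, is a difference
of two points of `S_{(a+b)l/2, G'}`, so S-REC bounds its norm by the norms of `Aη` and of the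
images of the tails, which RIP controls. Each tail block has `ℓ₂` norm at most `(bl)^{-1/2}`
times the `ℓ₁` norm of the block of `bl` coordinates preceding it. These preceding blocks avoid
the largest `al` coordinates of `h`, and off those `h` has `ℓ₁` mass at most `‖h - v‖₁ = ‖η - η̂‖₁`,
since the largest `al` coordinates are the best `al`-sparse `ℓ₁` approximation.
Taking the infimum over `η̂` yields `σ_{al,G'}(η)`.
-/

section

open Finset

variable {n : ℕ}

lemma l2_eq_norm_toLp (x : Fin n → ℝ) : l2 x = ‖WithLp.toLp 2 x‖ := by
  simp [EuclideanSpace.norm_eq, l2]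

lemma l2_add_le (x y : Fin n → ℝ) : l2 (x + y) ≤ l2 x + l2 y := by
  simpa only [l2_eq_norm_toLp, WithLp.toLp_add] using norm_add_le _ _

lemma l2_sub_le (x y : Fin n → ℝ) : l2 (x - y) ≤ l2 x + l2 y := by
  simpa only [l2_eq_norm_toLp, WithLp.toLp_sub] using norm_sub_le _ _

lemma l2_sum_le {ι : Type*} (s : Finset ι) (f : ι → Fin n → ℝ) :
    l2 (∑ t ∈ s, f t) ≤ ∑ t ∈ s, l2 (f t) := by
  simpa only [l2_eq_norm_toLp, WithLp.toLp_sum] using norm_sum_le _ _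

lemma l2_indicator (s : Finset (Fin n)) (x : Fin n → ℝ) :
    l2 ((s : Set (Fin n)).indicator x) = Real.sqrt (∑ i ∈ s, x i ^ 2) := by
  rw [l2, ← sum_indicator_subset _ s.subset_univ]
  congr 1
  exact sum_congr rfl fun i _ => by by_cases hi : i ∈ s <;> simp [hi]

lemma l0_le_card_of_support_subset {x : Fin n → ℝ} {s : Finset (Fin n)}
    (hx : ∀ i, x i ≠ 0 → i ∈ s) : l0 x ≤ s.card :=
  card_le_card fun i hi => hx i (mem_filter.mp hi).2

lemma l0_indicator_le (s : Finset (Fin n)) (x : Fin n → ℝ) :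
    l0 ((s : Set (Fin n)).indicator x) ≤ s.card :=
  l0_le_card_of_support_subset fun i hi => by
    by_contra h; exact hi (Set.indicator_of_notMem (by simpa using h) _)

lemma indicator_eq_sum_single (s : Finset (Fin n)) (x : Fin n → ℝ) :
    (s : Set (Fin n)).indicator x = ∑ i ∈ s, Pi.single i (x i) := by
  ext j
  by_cases hj : j ∈ s <;> simp [Finset.sum_apply, Pi.single_apply, hj]

lemma exists_sub_eq_of_l0_le_two_mul {u : Fin n → ℝ} {c : ℕ} (hu : l0 u ≤ 2 * c) :
    ∃ u₁ u₂ : Fin n → ℝ, l0 u₁ ≤ c ∧ l0 u₂ ≤ c ∧ u = u₁ - u₂ := by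
  set S := univ.filter fun i => u i ≠ 0
  obtain ⟨S₁, hS₁S, hS₁⟩ := exists_subset_card_eq (min_le_right c S.card)
  refine ⟨(S₁ : Set (Fin n)).indicator u, ((S \ S₁ : Finset (Fin n)) : Set (Fin n)).indicator (-u),
    (l0_indicator_le _ _).trans (by omega), (l0_indicator_le _ _).trans ?_, ?_⟩
  · rw [card_sdiff_of_subset hS₁S]; change S.card ≤ 2 * c at hu; omega
  · ext i
    by_cases h₁ : i ∈ S₁
    · simp [h₁]
    · by_cases hS : i ∈ S
      · simp [h₁, hS]
      · have hu0 : u i = 0 := by simpa [S] using hS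
        simp [h₁, hu0]

lemma sum_le_sum_of_card_le_of_forall_le {ι : Type*} {f : ι → ℝ} {s t : Finset ι} (hf : 0 ≤ f)
    (hcard : s.card ≤ t.card) (hst : ∀ i ∈ s, ∀ j ∈ t, f i ≤ f j) :
    ∑ i ∈ s, f i ≤ ∑ j ∈ t, f j := by
  rcases s.eq_empty_or_nonempty with rfl | hs
  · simpa using sum_nonneg fun j _ => hf j
  obtain ⟨i₀, hi₀, hmax⟩ := s.exists_max_image f hs
  calc ∑ i ∈ s, f i ≤ s.card • f i₀ := sum_le_card_nsmul s f _ hmax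
    _ ≤ t.card • f i₀ := nsmul_le_nsmul_left (hf i₀) hcard
    _ ≤ ∑ j ∈ t, f j := card_nsmul_le_sum t f _ (hst i₀ hi₀)

-- The largest `s.card` entries of `x` form its best `s.card`-sparse `ℓ₁` approximation.
lemma sum_abs_compl_le_l1_sub {x v : Fin n → ℝ} {s : Finset (Fin n)} (hv : l0 v ≤ s.card)
    (hs : ∀ i ∈ s, ∀ j ∉ s, |x j| ≤ |x i|) :
    ∑ j ∈ sᶜ, |x j| ≤ l1 (x - v) := by
  set S := univ.filter fun i => v i ≠ 0
  have hSs : ∑ j ∈ S \ s, |x j| ≤ ∑ j ∈ s \ S, |x j| :=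
    sum_le_sum_of_card_le_of_forall_le (fun _ => abs_nonneg _)
      (card_sdiff_le_card_sdiff_iff.mpr hv)
      fun j hj i hi => hs i (mem_sdiff.mp hi).1 j (mem_sdiff.mp hj).2
  have hoff : ∑ j ∈ Sᶜ, |x j| ≤ l1 (x - v) := by
    rw [l1, ← sum_compl_add_sum S]
    refine le_add_of_le_of_nonneg (sum_le_sum fun j hj => ?_) (sum_nonneg fun _ _ => abs_nonneg _)
    simp_all [S]
  have := sum_compl_add_sum s fun j => |x j|
  have := sum_compl_add_sum S fun j => |x j|
  have := sum_inter_add_sum_sdiff s S fun j => |x j|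
  have := sum_inter_add_sum_sdiff S s fun j => |x j|
  rw [inter_comm] at this
  linarith

lemma l2_indicator_le_of_forall_abs_le {x : Fin n → ℝ} {s t : Finset (Fin n)} {B : ℕ}
    (hs : s.card ≤ B) (ht : B ≤ t.card) (hst : ∀ i ∈ s, ∀ j ∈ t, |x i| ≤ |x j|) :
    l2 ((s : Set (Fin n)).indicator x) ≤ (Real.sqrt B)⁻¹ * ∑ j ∈ t, |x j| := by
  set L := ∑ j ∈ t, |x j|
  rcases B.eq_zero_or_pos with rfl | hB
  · simp [card_eq_zero.mp (Nat.le_zero.mp hs), l2]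
  have hB' : (0 : ℝ) < B := by exact_mod_cast hB
  -- each entry on `s` is at most the average of `|x|` over `t`
  have hpt : ∀ i ∈ s, |x i| ≤ L / B := fun i hi => by
    rw [le_div_iff₀' hB']
    calc (B : ℝ) * |x i| ≤ t.card • |x i| := by
          rw [nsmul_eq_mul]; gcongr
      _ ≤ L := card_nsmul_le_sum t _ _ (hst i hi)
  have hsq : ∑ i ∈ s, x i ^ 2 ≤ ((Real.sqrt B)⁻¹ * L) ^ 2 :=
    calc ∑ i ∈ s, x i ^ 2 ≤ s.card • (L / B) ^ 2 := by
          refine sum_le_card_nsmul s _ _ fun i hi => ?_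
          rw [← sq_abs]; exact pow_le_pow_left₀ (abs_nonneg _) (hpt i hi) 2
      _ ≤ B * (L / B) ^ 2 := by
          rw [nsmul_eq_mul]; gcongr
      _ = ((Real.sqrt B)⁻¹ * L) ^ 2 := by
          rw [mul_pow, inv_pow, Real.sq_sqrt hB'.le]; field_simp
  rw [l2_indicator]
  exact Real.sqrt_le_iff.mpr ⟨mul_nonneg (by positivity) (sum_nonneg fun _ _ => abs_nonneg _), hsq⟩

section RankBlocks

lemma exists_perm_antitone {α : Type*} [LinearOrder α] (f : Fin n → α) :
    ∃ σ : Equiv.Perm (Fin n), ∀ i j, σ i ≤ σ j → f j ≤ f i := by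
  refine ⟨(Tuple.sort (OrderDual.toDual ∘ f)).symm, fun i j hij => ?_⟩
  simpa using Tuple.monotone_sort (OrderDual.toDual ∘ f) hij

variable (σ : Equiv.Perm (Fin n))

def rankIco (p q : ℕ) : Finset (Fin n) := univ.filter fun i => (σ i : ℕ) ∈ Ico p q

variable {σ}

lemma mem_rankIco {p q : ℕ} {i : Fin n} : i ∈ rankIco σ p q ↔ p ≤ σ i ∧ (σ i : ℕ) < q := by
  simp [rankIco]

lemma card_rankIco (p q : ℕ) : (rankIco σ p q).card = min q n - p := by
  rw [← Nat.card_Ico, ← card_image_of_injective _ (Fin.val_injective.comp σ.injective)]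
  congr 1
  ext c
  simp only [mem_image, mem_rankIco, Function.comp_apply, mem_Ico]
  constructor
  · rintro ⟨i, hi, rfl⟩; have := (σ i).isLt; omega
  · rintro ⟨hpc, hcq⟩
    exact ⟨σ.symm ⟨c, by omega⟩, by simp; omega, by simp⟩

lemma rankIco_union {p q r : ℕ} (hpq : p ≤ q) (hqr : q ≤ r) :
    rankIco σ p q ∪ rankIco σ q r = rankIco σ p r := by
  ext i; simp only [mem_union, mem_rankIco]; omega

lemma disjoint_rankIco (p q r : ℕ) : Disjoint (rankIco σ p q) (rankIco σ q r) :=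
  disjoint_left.mpr fun i hi hi' => by rw [mem_rankIco] at hi hi'; omega

lemma rankIco_eq_compl {q r : ℕ} (hr : n ≤ r) : rankIco σ q r = (rankIco σ 0 q)ᶜ := by
  ext i; simp only [mem_compl, mem_rankIco]; have := (σ i).isLt; omega

lemma sum_sum_rankIco_blocks {M : Type*} [AddCommMonoid M] (g : Fin n → M) (p B N : ℕ) :
    ∑ t ∈ range N, ∑ i ∈ rankIco σ (p + t * B) (p + t * B + B), g i
      = ∑ i ∈ rankIco σ p (p + N * B), g i := by
  induction N with
  | zero => simp [rankIco]
  | succ N ih =>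
    rw [sum_range_succ, ih, ← sum_union (disjoint_rankIco _ _ _),
      rankIco_union (by omega) (by omega), add_mul, one_mul, add_assoc]

end RankBlocks

section SortedBlocks

variable {σ : Equiv.Perm (Fin n)} {x : Fin n → ℝ}

lemma eq_indicator_add_sum_indicator_rankIco (σ : Equiv.Perm (Fin n)) (x : Fin n → ℝ)
    {p B N : ℕ} (hN : n ≤ p + N * B) :
    x = (rankIco σ 0 p : Set (Fin n)).indicator x
      + ∑ t ∈ range N, (rankIco σ (p + t * B) (p + t * B + B) : Set (Fin n)).indicator x := by
  simp_rw [indicator_eq_sum_single]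
  rw [sum_sum_rankIco_blocks, ← sum_union (disjoint_rankIco _ _ _),
    rankIco_union (Nat.zero_le _) (Nat.le_add_right _ _), rankIco_eq_compl hN]
  simpa [rankIco] using (univ_sum_single x).symm

lemma l2_indicator_rankIco_le (hσ : ∀ i j, σ i ≤ σ j → |x j| ≤ |x i|) (p B : ℕ) :
    l2 ((rankIco σ (p + B) (p + B + B) : Set (Fin n)).indicator x)
      ≤ (Real.sqrt B)⁻¹ * ∑ i ∈ rankIco σ p (p + B), |x i| := by
  rcases (rankIco σ (p + B) (p + B + B)).eq_empty_or_nonempty with hempty | ⟨i₀, hi₀⟩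
  · rw [hempty, coe_empty, Set.indicator_empty, l2]
    simpa using mul_nonneg (by positivity) (sum_nonneg fun _ _ => abs_nonneg _)
  have hn : p + B < n := (mem_rankIco.mp hi₀).1.trans_lt (σ i₀).isLt
  refine l2_indicator_le_of_forall_abs_le (by rw [card_rankIco]; omega)
    (by rw [card_rankIco]; omega) fun i hi j hj => hσ j i ?_
  rw [mem_rankIco] at hi hj
  exact Fin.le_def.mpr (by omega)

lemma sum_l2_indicator_rankIco_le (hσ : ∀ i j, σ i ≤ σ j → |x j| ≤ |x i|)
    {v : Fin n → ℝ} {K : ℕ} (hv : l0 v ≤ K) (B N : ℕ) :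
    ∑ t ∈ range N, l2 ((rankIco σ (K + B + t * B) (K + B + t * B + B) : Set (Fin n)).indicator x)
      ≤ (Real.sqrt B)⁻¹ * l1 (x - v) := by
  have hv' : l0 v ≤ (rankIco σ 0 K).card := by
    rw [card_rankIco, Nat.sub_zero]
    exact le_min hv ((card_filter_le _ _).trans (card_fin n).le)
  have hdom : ∀ i ∈ rankIco σ 0 K, ∀ j ∉ rankIco σ 0 K, |x j| ≤ |x i| := fun i hi j hj => by
    rw [mem_rankIco] at hi hj
    exact hσ i j (Fin.le_def.mpr (by omega))
  calc ∑ t ∈ range N, l2 ((rankIco σ (K + B + t * B) (K + B + t * B + B) : Set (Fin n)).indicator x)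
      ≤ ∑ t ∈ range N, (Real.sqrt B)⁻¹ * ∑ i ∈ rankIco σ (K + t * B) (K + t * B + B), |x i| :=
        sum_le_sum fun t _ => by
          simpa only [add_right_comm K B] using l2_indicator_rankIco_le hσ (K + t * B) B
    _ = (Real.sqrt B)⁻¹ * ∑ i ∈ rankIco σ K (K + N * B), |x i| := by
        rw [← mul_sum, sum_sum_rankIco_blocks]
    _ ≤ (Real.sqrt B)⁻¹ * ∑ i ∈ (rankIco σ 0 K)ᶜ, |x i| := by
        refine mul_le_mul_of_nonneg_left (sum_le_sum_of_subset_of_nonneg (fun i hi => ?_)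
          fun _ _ _ => abs_nonneg _) (by positivity)
        rw [mem_compl, mem_rankIco]; rw [mem_rankIco] at hi; omega
    _ ≤ (Real.sqrt B)⁻¹ * l1 (x - v) := by
        gcongr
        exact sum_abs_compl_le_l1_sub hv' hdom

end SortedBlocks

lemma one_add_div_one_sub_add_one_pos {α : ℝ} (hα : α < 1) : 0 < (1 + α) / (1 - α) + 1 := by
  have h1α := sub_pos.mpr hα
  rw [div_add_one h1α.ne']
  exact div_pos (by linarith) h1α

section Matrix

open Matrix

variable {m : ℕ} (A : Matrix (Fin m) (Fin n) ℝ) {α δ ε : ℝ}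

lemma l2_le_of_eq_add_sum (hα : α < 1) {ι : Type*} (s : Finset ι) {η x : Fin n → ℝ}
    {y : ι → Fin n → ℝ} (hη : η = x + ∑ t ∈ s, y t) (hAη : l2 (A *ᵥ η) ≤ ε)
    (hx : (1 - α) * l2 x - δ ≤ l2 (A *ᵥ x))
    (hy : ∀ t ∈ s, l2 (A *ᵥ y t) ≤ (1 + α) * l2 (y t)) :
    l2 η ≤ ((1 + α) / (1 - α) + 1) * ∑ t ∈ s, l2 (y t) + 1 / (1 - α) * ε + δ / (1 - α) := by
  set T := ∑ t ∈ s, l2 (y t)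
  have h1α : 0 < 1 - α := sub_pos.mpr hα
  have hηx : l2 η ≤ l2 x + T := hη ▸ (l2_add_le _ _).trans (add_le_add le_rfl (l2_sum_le _ _))
  have hAx : l2 (A *ᵥ x) ≤ ε + (1 + α) * T :=
    calc l2 (A *ᵥ x) = l2 (A *ᵥ η - ∑ t ∈ s, A *ᵥ y t) := by
          rw [← Matrix.mulVec_sum, ← Matrix.mulVec_sub, hη, add_sub_cancel_right]
      _ ≤ l2 (A *ᵥ η) + ∑ t ∈ s, l2 (A *ᵥ y t) :=
          (l2_sub_le _ _).trans (add_le_add le_rfl (l2_sum_le _ _))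
      _ ≤ ε + (1 + α) * T := by
          rw [mul_sum]; exact add_le_add hAη (sum_le_sum hy)
  calc l2 η ≤ (ε + (1 + α) * T + δ) / (1 - α) + T := by
        refine hηx.trans (add_le_add_left ?_ T)
        rw [le_div_iff₀' h1α]; linarith
    _ = ((1 + α) / (1 - α) + 1) * T + 1 / (1 - α) * ε + δ / (1 - α) := by
        field_simp; ring

end Matrix

section GenerativeRange

variable {k : ℕ} (G : (Fin k → ℝ) → Fin n → ℝ) {j : ℕ} {u : Fin n → ℝ}

lemma add_mem_SjG' (z₁ z₂ : Fin k → ℝ) (hu : l0 u ≤ j) : G z₁ - G z₂ + u ∈ SjG' G j :=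
  ⟨z₁, z₂, by rwa [add_sub_cancel_left]⟩

lemma mem_SjG'_of_l0_le (hu : l0 u ≤ j) : u ∈ SjG' G j := by
  simpa using add_mem_SjG' G 0 0 hu

lemma le_mul_sigma'_add {T : Set (Fin n → ℝ)} (hT : T.Nonempty) {x : Fin n → ℝ} {y c e : ℝ}
    (hc : 0 < c) (h : ∀ xh ∈ T, y ≤ c * l1 (x - xh) + e) : y ≤ c * sigma' T x + e := by
  obtain ⟨x₀, hx₀⟩ := hT
  have : (y - e) / c ≤ sigma' T x := by
    refine le_csInf ⟨_, x₀, hx₀, rfl⟩ ?_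
    rintro _ ⟨xh, hxh, rfl⟩
    rw [div_le_iff₀' hc]; linarith [h xh hxh]
  rw [div_le_iff₀' hc] at this; linarith

end GenerativeRange

section Recovery

open Matrix

variable {m k : ℕ} (A : Matrix (Fin m) (Fin n) ℝ) {G : (Fin k → ℝ) → Fin n → ℝ} {α δ ε : ℝ}

lemma l2_le_of_mem_SjG' {K B c : ℕ} (hB : 0 < B) (hc : K + B ≤ 2 * c) (hα : α < 1)
    (hSREC : ∀ x₁ ∈ SjG' G c, ∀ x₂ ∈ SjG' G c, (1 - α) * l2 (x₁ - x₂) - δ ≤ l2 (A *ᵥ (x₁ - x₂)))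
    (hRIP : ∀ x, l0 x ≤ B → l2 (A *ᵥ x) ≤ (1 + α) * l2 x)
    {η ηh : Fin n → ℝ} (hAη : l2 (A *ᵥ η) ≤ ε) (hηh : ηh ∈ SjG' G K) :
    l2 η ≤ (Real.sqrt B)⁻¹ * ((1 + α) / (1 - α) + 1) * l1 (η - ηh)
      + 1 / (1 - α) * ε + δ / (1 - α) := by
  obtain ⟨z₁, z₂, hv⟩ := hηh
  set d := G z₁ - G z₂
  set h := η - d
  obtain ⟨σ, hσ⟩ := exists_perm_antitone fun i => |h i|
  set head := (rankIco σ 0 (K + B) : Set (Fin n)).indicator h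
  set tail := fun t => (rankIco σ (K + B + t * B) (K + B + t * B + B) : Set (Fin n)).indicator h
  have hdecomp : η = (d + head) + ∑ t ∈ range n, tail t := by
    rw [add_assoc, ← eq_indicator_add_sum_indicator_rankIco σ h (N := n)
      (by nlinarith), add_sub_cancel]
  have hhead : (1 - α) * l2 (d + head) - δ ≤ l2 (A *ᵥ (d + head)) := by
    obtain ⟨u₁, u₂, hu₁, hu₂, hu⟩ := exists_sub_eq_of_l0_le_two_mul (c := c)
      ((l0_indicator_le _ _).trans (by rw [card_rankIco]; omega) : l0 head ≤ 2 * c)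
    have e : d + head = (d + u₁) - u₂ := by rw [show head = u₁ - u₂ from hu, add_sub_assoc]
    rw [e]
    exact hSREC _ (add_mem_SjG' G z₁ z₂ hu₁) _ (mem_SjG'_of_l0_le G hu₂)
  have htail : ∀ t ∈ range n, l2 (A *ᵥ tail t) ≤ (1 + α) * l2 (tail t) := fun t _ =>
    hRIP _ ((l0_indicator_le _ _).trans (by rw [card_rankIco]; omega))
  have hsum : ∑ t ∈ range n, l2 (tail t) ≤ (Real.sqrt B)⁻¹ * l1 (η - ηh) := by
    simpa only [h, sub_sub_sub_cancel_right] using sum_l2_indicator_rankIco_le hσ hv B n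
  have hC := (one_add_div_one_sub_add_one_pos hα).le
  calc l2 η ≤ ((1 + α) / (1 - α) + 1) * ∑ t ∈ range n, l2 (tail t)
        + 1 / (1 - α) * ε + δ / (1 - α) :=
        l2_le_of_eq_add_sum A hα _ hdecomp hAη hhead htail
    _ ≤ ((1 + α) / (1 - α) + 1) * ((Real.sqrt B)⁻¹ * l1 (η - ηh))
        + 1 / (1 - α) * ε + δ / (1 - α) := by gcongr
    _ = _ := by ring

end Recovery

end

theorem stmt10_general {m n k : ℕ} (a b l : ℕ) (hb : 0 < b) (hl : 0 < l)
    (heven : Even ((a + b) * l))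
    (A : Matrix (Fin m) (Fin n) ℝ) (G : (Fin k → ℝ) → (Fin n → ℝ))
    (α δ ε : ℝ) (hα : α ∈ Set.Ioo (0 : ℝ) 1)
    (hSREC : ∀ x₁ ∈ SjG' G ((a + b) * l / 2), ∀ x₂ ∈ SjG' G ((a + b) * l / 2),
      l2 (A.mulVec (x₁ - x₂)) ≥ (1 - α) * l2 (x₁ - x₂) - δ)
    (hRIP : ∀ x : Fin n → ℝ, l0 x ≤ b * l →
      (1 - α) * l2 x ≤ l2 (A.mulVec x) ∧ l2 (A.mulVec x) ≤ (1 + α) * l2 x) :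
    ∀ η : Fin n → ℝ, l2 (A.mulVec η) ≤ ε →
      l2 η ≤ (Real.sqrt (b * l))⁻¹ * ((1 + α) / (1 - α) + 1) * sigma' (SjG' G (a * l)) η
        + (1 / (1 - α)) * ε + δ / (1 - α) := by
  intro η hη
  have hB : 0 < b * l := Nat.mul_pos hb hl
  have hc : a * l + b * l ≤ 2 * ((a + b) * l / 2) := by
    have := Nat.div_two_mul_two_of_even heven
    rw [add_mul] at this ⊢; omega
  have hC : 0 < (Real.sqrt (b * l))⁻¹ * ((1 + α) / (1 - α) + 1) :=
    mul_pos (inv_pos.mpr (Real.sqrt_pos.mpr (by exact_mod_cast hB)))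
      (one_add_div_one_sub_add_one_pos hα.2)
  rw [add_assoc]
  refine le_mul_sigma'_add ⟨0, mem_SjG'_of_l0_le G (by simp [l0])⟩ hC fun ηh hηh => ?_
  have := l2_le_of_mem_SjG' A hB hc hα.2 hSREC (fun x hx => (hRIP x hx).2) hη hηh
  push_cast at this
  linarith

/-- If A satisfies S-REC(S_{(a+b)l/2, G'}, 1-α, δ) and RIP(bl, α), then for any
    η in the ε-tube of A,
    ‖η‖₂ ≤ (bl)^{-1/2}(C₀+1) σ_{al,G'}(η) + C₁ε + δ'
    with C₀ = (1+α)/(1-α), C₁ = 1/(1-α), δ' = δ/(1-α). -/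
theorem stmt10 {m n k : ℕ} (a b l : ℕ) (ha : 0 < a) (hb : 0 < b) (hl : 0 < l)
    (heven : Even ((a + b) * l))
    (A : Matrix (Fin m) (Fin n) ℝ) (G : (Fin k → ℝ) → (Fin n → ℝ))
    (α δ ε : ℝ) (hα : α ∈ Set.Ioo (0 : ℝ) 1) (hδ : 0 ≤ δ) (hε : 0 ≤ ε)
    (hSREC : ∀ x₁ ∈ SjG' G ((a + b) * l / 2), ∀ x₂ ∈ SjG' G ((a + b) * l / 2),
      l2 (A.mulVec (x₁ - x₂)) ≥ (1 - α) * l2 (x₁ - x₂) - δ)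
    (hRIP : ∀ x : Fin n → ℝ, l0 x ≤ b * l →
      (1 - α) * l2 x ≤ l2 (A.mulVec x) ∧ l2 (A.mulVec x) ≤ (1 + α) * l2 x) :
    ∀ η : Fin n → ℝ, l2 (A.mulVec η) ≤ ε →
      l2 η ≤ (Real.sqrt (b * l))⁻¹ * ((1 + α) / (1 - α) + 1) * sigma' (SjG' G (a * l)) η
        + (1 / (1 - α)) * ε + δ / (1 - α) :=
  stmt10_general a b l hb hl heven A G α δ ε hα hSREC hRIP
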